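/- arXiv:2302.06237 — 7 statements merged into one kernel-verified Lean document; each statement's English description precedes it below -/
import Mathlib

section
/- Let α, β ∈ ℝ with β ≠ 0, and suppose the complex numbers η1 = α + iβ, η2 = α - iβ, η3 = -2α satisfy η1 e^{-η1 L} = η2 e^{-η2 L} = η3 e^{-η3 L} for some L > 0. Then the function φ(x) = -β e^{αx} cos(βx) + β e^{-2αx} + 3α e^{αx} sin(βx) satisfies φ(0) = 0, φ'(0) = 0, φ(L) = 0, and φ''(L) = 0. -/
/-- `η₁ = α + iβ` -/
noncomputable def eta1 (α β : ℝ) : ℂ := (α : ℂ) + (β : ℂ) * Complex.I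

/-- `η₂ = α - iβ` -/
noncomputable def eta2 (α β : ℝ) : ℂ := (α : ℂ) - (β : ℂ) * Complex.I

/-- `η₃ = -2α` -/
noncomputable def eta3 (α : ℝ) : ℂ := -2 * (α : ℂ)

/-- `φ(x) = -β e^{αx} cos(βx) + β e^{-2αx} + 3α e^{αx} sin(βx)` -/
noncomputable def phiFun (α β : ℝ) (x : ℝ) : ℝ :=
  -β * Real.exp (α * x) * Real.cos (β * x) + β * Real.exp (-2 * α * x)
    + 3 * α * Real.exp (α * x) * Real.sin (β * x)

/-!
With `η₁, η₂, η₃` the three exponents, `2φ` is the imaginary part of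
`Φ(x) = ∑_cyc (η₂ - η₃) e^{η₁ x}`, whose `n`-th derivative is
`Φₙ(x) = ∑_cyc (η₂ - η₃) η₁ⁿ e^{η₁ x}`. At `0` this is `∑_cyc (η₂ - η₃) η₁ⁿ`, which vanishes for
`n = 0, 1`. At `L` the hypothesis says `η_j e^{-η_j L} = K` for all `j`, with `K ≠ 0` since
`η₁ ≠ 0`; hence `K Φₙ(L) = ∑_cyc (η₂ - η₃) η₁ⁿ⁺¹`, which vanishes for `n = 0`, and for `n = 2`
equals `-(η₁ - η₂)(η₂ - η₃)(η₃ - η₁)(η₁ + η₂ + η₃) = 0`.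
-/

open Complex

noncomputable def cyclicExpSum (η₁ η₂ η₃ : ℂ) (n : ℕ) (z : ℂ) : ℂ :=
  (η₂ - η₃) * η₁ ^ n * exp (η₁ * z) + (η₃ - η₁) * η₂ ^ n * exp (η₂ * z)
    + (η₁ - η₂) * η₃ ^ n * exp (η₃ * z)

section
variable (η₁ η₂ η₃ : ℂ)

theorem hasDerivAt_cyclicExpSum (n : ℕ) (z : ℂ) :
    HasDerivAt (cyclicExpSum η₁ η₂ η₃ n) (cyclicExpSum η₁ η₂ η₃ (n + 1) z) z := by
  have hexp (η : ℂ) : HasDerivAt (fun w => exp (η * w)) (exp (η * z) * η) z := by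
    simpa using ((hasDerivAt_id z).const_mul η).cexp
  refine ((((hexp η₁).const_mul ((η₂ - η₃) * η₁ ^ n)).add
    ((hexp η₂).const_mul ((η₃ - η₁) * η₂ ^ n))).add
    ((hexp η₃).const_mul ((η₁ - η₂) * η₃ ^ n))).congr_deriv ?_
  simp only [cyclicExpSum]
  ring

theorem deriv_im_cyclicExpSum (n : ℕ) :
    deriv (fun x : ℝ => (cyclicExpSum η₁ η₂ η₃ n x).im / 2)
      = fun x : ℝ => (cyclicExpSum η₁ η₂ η₃ (n + 1) x).im / 2 := by
  funext x
  exact ((imCLM.hasFDerivAt.comp_hasDerivAt x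
    (hasDerivAt_cyclicExpSum η₁ η₂ η₃ n x).comp_ofReal).div_const 2).deriv

theorem cyclicExpSum_zero_eq (n : ℕ) :
    cyclicExpSum η₁ η₂ η₃ n 0 = (η₂ - η₃) * η₁ ^ n + (η₃ - η₁) * η₂ ^ n + (η₁ - η₂) * η₃ ^ n := by
  simp [cyclicExpSum]

theorem mul_cyclicExpSum_of_eq {K L : ℂ} (h₁ : η₁ * exp (-η₁ * L) = K)
    (h₂ : η₂ * exp (-η₂ * L) = K) (h₃ : η₃ * exp (-η₃ * L) = K) (n : ℕ) :
    K * cyclicExpSum η₁ η₂ η₃ n L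
      = (η₂ - η₃) * η₁ ^ (n + 1) + (η₃ - η₁) * η₂ ^ (n + 1) + (η₁ - η₂) * η₃ ^ (n + 1) := by
  have hK (η : ℂ) (h : η * exp (-η * L) = K) : K * exp (η * L) = η := by
    rw [← h, mul_assoc, ← exp_add, neg_mul, neg_add_cancel, exp_zero, mul_one]
  simp only [cyclicExpSum]
  linear_combination ((η₂ - η₃) * η₁ ^ n) * hK η₁ h₁ + ((η₃ - η₁) * η₂ ^ n) * hK η₂ h₂
    + ((η₁ - η₂) * η₃ ^ n) * hK η₃ h₃

end

theorem phiFun_eq (α β x : ℝ) :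
    phiFun α β x = (cyclicExpSum (eta1 α β) (eta2 α β) (eta3 α) 0 x).im / 2 := by
  simp only [phiFun, neg_mul, cyclicExpSum, eta2, eta3, sub_neg_eq_add, eta1, pow_zero,
    mul_one, add_sub_sub_cancel, add_im, mul_im, add_re, sub_re, ofReal_re, mul_re, I_re, mul_zero,
    ofReal_im, I_im, sub_self, sub_zero, re_ofNat, im_ofNat, exp_im, add_zero, zero_add, sub_im,
    zero_sub, zero_mul, exp_re, neg_re, Real.sin_neg, mul_neg, neg_im, neg_zero, Real.cos_neg,
    Real.sin_zero, Real.cos_zero]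
  ring

theorem stmt_3_general (α β L : ℝ) (hβ : β ≠ 0)
    (h12 : eta1 α β * Complex.exp (-(eta1 α β) * (L : ℂ))
        = eta2 α β * Complex.exp (-(eta2 α β) * (L : ℂ)))
    (h23 : eta2 α β * Complex.exp (-(eta2 α β) * (L : ℂ))
        = eta3 α * Complex.exp (-(eta3 α) * (L : ℂ))) :
    phiFun α β 0 = 0 ∧ deriv (phiFun α β) 0 = 0 ∧ phiFun α β L = 0 ∧
      deriv (deriv (phiFun α β)) L = 0 := by
  set η₁ := eta1 α β
  set η₂ := eta2 α β
  set η₃ := eta3 α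
  have hsum : η₁ + η₂ + η₃ = 0 := by simp only [η₁, η₂, η₃, eta1, eta2, eta3]; ring
  have hK : η₁ * exp (-η₁ * L) ≠ 0 :=
    mul_ne_zero (fun h => hβ (by simpa [η₁, eta1] using congrArg im h)) (exp_ne_zero _)
  have hL := mul_cyclicExpSum_of_eq η₁ η₂ η₃ rfl h12.symm (h12.trans h23).symm
  have vanish {z : ℂ} (n : ℕ) (h : cyclicExpSum η₁ η₂ η₃ n z = 0) :
      (cyclicExpSum η₁ η₂ η₃ n z).im / 2 = 0 := by simp [h]
  rw [show phiFun α β = _ from funext (phiFun_eq α β), deriv_im_cyclicExpSum,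
    deriv_im_cyclicExpSum]
  refine ⟨vanish 0 ?_, vanish 1 ?_, vanish 0 ?_, vanish 2 ?_⟩
  · rw [ofReal_zero, cyclicExpSum_zero_eq]; ring
  · rw [ofReal_zero, cyclicExpSum_zero_eq]; ring
  · refine (mul_eq_zero.mp ((hL 0).trans ?_)).resolve_left hK
    ring
  · refine (mul_eq_zero.mp ((hL 2).trans ?_)).resolve_left hK
    linear_combination (-(η₁ - η₂) * (η₂ - η₃) * (η₃ - η₁)) * hsum

theorem stmt_3 (α β L : ℝ) (hβ : β ≠ 0) (hL : 0 < L)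
    (h12 : eta1 α β * Complex.exp (-(eta1 α β) * (L : ℂ))
        = eta2 α β * Complex.exp (-(eta2 α β) * (L : ℂ)))
    (h23 : eta2 α β * Complex.exp (-(eta2 α β) * (L : ℂ))
        = eta3 α * Complex.exp (-(eta3 α) * (L : ℂ))) :
    phiFun α β 0 = 0 ∧ deriv (phiFun α β) 0 = 0 ∧ phiFun α β L = 0 ∧
      deriv (deriv (phiFun α β)) L = 0 :=
  stmt_3_general α β L hβ h12 h23
end

section
/- Let a < 0 and b > 0 be real numbers satisfying (a+ib)e^{a+ib} = (a-ib)e^{a-ib} = -2a e^{-2a}. Then b² = 4a²(e^{-6a} - 1/4), b cos b + a sin b = 0, and a cos b - b sin b > 0. -/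
theorem stmt_7 (a b : ℝ) (ha : a < 0) (hb : 0 < b)
    (h1 : ((a : ℂ) + (b : ℂ) * Complex.I) * Complex.exp ((a : ℂ) + (b : ℂ) * Complex.I)
        = ((a : ℂ) - (b : ℂ) * Complex.I) * Complex.exp ((a : ℂ) - (b : ℂ) * Complex.I))
    (h2 : ((a : ℂ) - (b : ℂ) * Complex.I) * Complex.exp ((a : ℂ) - (b : ℂ) * Complex.I)
        = (-2 * (a : ℂ)) * Complex.exp (-2 * (a : ℂ))) :
    b ^ 2 = 4 * a ^ 2 * (Real.exp (-6 * a) - 1/4) ∧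
    b * Real.cos b + a * Real.sin b = 0 ∧
    0 < a * Real.cos b - b * Real.sin b := by
  rw [Complex.ext_iff] at h2
  obtain ⟨hre, him⟩ := h2
  simp [Complex.exp_re, Complex.exp_im] at hre him
  have hE : (0:ℝ) < Real.exp a := Real.exp_pos a
  have hE2 : (0:ℝ) < Real.exp (-(2*a)) := Real.exp_pos _
  -- imaginary part
  have hI0 : (a * Real.sin b + b * Real.cos b) * Real.exp a = 0 := by
    linear_combination -him
  have hI : a * Real.sin b + b * Real.cos b = 0 :=
    (mul_eq_zero.mp hI0).resolve_right hE.ne'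
  -- positivity of real combination
  have hpos : 0 < a * Real.cos b - b * Real.sin b := by
    nlinarith [mul_pos (show (0:ℝ) < -2*a by linarith) hE2]
  refine ⟨?_, by linarith, hpos⟩
  -- key modulus equation
  have key : (Real.exp a)^2 * (a^2 + b^2) = 4*a^2 * (Real.exp (-(2*a)))^2 := by
    have pyth := Real.sin_sq_add_cos_sq b
    linear_combination (Real.exp a*(a*Real.cos b - b*Real.sin b) - 2*a*Real.exp (-(2*a))) * hre
      + (Real.exp a^2 * (a*Real.sin b + b*Real.cos b)) * hI
      - (Real.exp a^2*(a^2+b^2)) * pyth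
  have hexp : Real.exp (-6*a) * (Real.exp a)^2 = (Real.exp (-(2*a)))^2 := by
    rw [sq, sq, ← Real.exp_add, ← Real.exp_add, ← Real.exp_add]
    congr 1; ring
  have goal' : b^2 * (Real.exp a)^2 = (4*a^2*(Real.exp (-6*a) - 1/4)) * (Real.exp a)^2 := by
    linear_combination key - 4*a^2 * hexp
  exact mul_right_cancel₀ (by positivity) goal'
end

section
/- Conversely, let a < 0 and b > 0 satisfy a² + b² = 4a² e^{-6a}, b cos b + a sin b = 0, and a cos b - b sin b > 0. Then (a+ib)e^{a+ib} = (a-ib)e^{a-ib} = -2a e^{-2a}. -/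
theorem stmt_8 (a b : ℝ) (ha : a < 0) (hb : 0 < b)
    (h1 : a ^ 2 + b ^ 2 = 4 * a ^ 2 * Real.exp (-6 * a))
    (h2 : b * Real.cos b + a * Real.sin b = 0)
    (h3 : 0 < a * Real.cos b - b * Real.sin b) :
    ((a : ℂ) + (b : ℂ) * Complex.I) * Complex.exp ((a : ℂ) + (b : ℂ) * Complex.I)
      = ((a : ℂ) - (b : ℂ) * Complex.I) * Complex.exp ((a : ℂ) - (b : ℂ) * Complex.I) ∧
    ((a : ℂ) - (b : ℂ) * Complex.I) * Complex.exp ((a : ℂ) - (b : ℂ) * Complex.I)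
      = (-2 * (a : ℂ)) * Complex.exp (-2 * (a : ℂ)) := by
  -- key real identity
  have hsq : (a * Real.cos b - b * Real.sin b) ^ 2 = (-2 * a * Real.exp (-3 * a)) ^ 2 := by
    have hpy : Real.cos b ^ 2 + Real.sin b ^ 2 = 1 := Real.cos_sq_add_sin_sq b
    have : (a * Real.cos b - b * Real.sin b) ^ 2
        + (b * Real.cos b + a * Real.sin b) ^ 2 = a ^ 2 + b ^ 2 := by nlinarith [hpy]
    have hee : Real.exp (-3 * a) ^ 2 = Real.exp (-6 * a) := by
      rw [← Real.exp_nat_mul]; ring_nf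
    rw [h2] at this
    nlinarith [this, h1, hee]
  have key : a * Real.cos b - b * Real.sin b = -2 * a * Real.exp (-3 * a) := by
    have h4 : 0 < -2 * a * Real.exp (-3 * a) := by nlinarith [Real.exp_pos (-3*a)]
    have h5 : (a * Real.cos b - b * Real.sin b - (-2 * a * Real.exp (-3 * a)))
        * (a * Real.cos b - b * Real.sin b + (-2 * a * Real.exp (-3 * a))) = 0 := by
      linear_combination hsq
    rcases mul_eq_zero.mp h5 with h | h
    · linarith
    · linarith
  have key2 : Real.exp a * (a * Real.cos b - b * Real.sin b) = -2 * a * Real.exp (-2 * a) := by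
    rw [key, mul_comm, mul_assoc, ← Real.exp_add]
    ring_nf
  have hexp1 : Complex.exp ((a : ℂ) + (b : ℂ) * Complex.I)
      = Real.exp a * (Real.cos b + Real.sin b * Complex.I) := by
    rw [Complex.exp_add, Complex.exp_mul_I, ← Complex.ofReal_exp, ← Complex.ofReal_cos,
      ← Complex.ofReal_sin]
  have hexp2 : Complex.exp ((a : ℂ) - (b : ℂ) * Complex.I)
      = Real.exp a * (Real.cos b - Real.sin b * Complex.I) := by
    have : (a : ℂ) - (b : ℂ) * Complex.I = (a : ℂ) + (-b : ℝ) * Complex.I := by push_cast; ring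
    rw [this, Complex.exp_add, Complex.exp_mul_I, ← Complex.ofReal_exp, ← Complex.ofReal_cos,
      ← Complex.ofReal_sin, Real.cos_neg, Real.sin_neg]
    push_cast
    ring
  have hexp3 : Complex.exp (-2 * (a : ℂ)) = (Real.exp (-2 * a) : ℝ) := by
    have : (-2 * (a : ℂ)) = ((-2 * a : ℝ) : ℂ) := by push_cast; ring
    rw [this, Complex.ofReal_exp]
  have hc2 : ((b : ℂ) * Real.cos b + (a : ℂ) * Real.sin b) = 0 := by
    have := congrArg (Complex.ofReal) h2
    push_cast at this ⊢
    convert this using 1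
  have e1 : ((a : ℂ) + (b : ℂ) * Complex.I) * Complex.exp ((a : ℂ) + (b : ℂ) * Complex.I)
      = ((Real.exp a * (a * Real.cos b - b * Real.sin b) : ℝ) : ℂ) := by
    rw [hexp1]
    have hI : (Complex.I : ℂ) ^ 2 = -1 := Complex.I_sq
    simp only [Complex.ofReal_mul, Complex.ofReal_sub]
    linear_combination ((Real.exp a : ℝ) : ℂ) * Complex.I * hc2
      + ((Real.exp a : ℝ) : ℂ) * (b : ℂ) * ((Real.sin b : ℝ) : ℂ) * hI
  have e2 : ((a : ℂ) - (b : ℂ) * Complex.I) * Complex.exp ((a : ℂ) - (b : ℂ) * Complex.I)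
      = ((Real.exp a * (a * Real.cos b - b * Real.sin b) : ℝ) : ℂ) := by
    rw [hexp2]
    have hI : (Complex.I : ℂ) ^ 2 = -1 := Complex.I_sq
    simp only [Complex.ofReal_mul, Complex.ofReal_sub]
    linear_combination (-((Real.exp a : ℝ) : ℂ) * Complex.I) * hc2
      + ((Real.exp a : ℝ) : ℂ) * (b : ℂ) * ((Real.sin b : ℝ) : ℂ) * hI
  refine ⟨e1.trans e2.symm, ?_⟩
  rw [e2, key2, hexp3]
  push_cast
  ring
end

section
/- If L > 0, a₁ < 0, a₂ < 0, and L² = 4a₁²(e^{-6a₁} - 1) = 4a₂²(e^{-6a₂} - 1), then a₁ = a₂. That is, the negative real number a with L² = 4a²(e^{-6a} - 1) is uniquely determined by L. -/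
lemma aux_mono (x y : ℝ) (hx : x < 0) (hy : y < 0) (hxy : x < y) :
    4 * y ^ 2 * (Real.exp (-6 * y) - 1) < 4 * x ^ 2 * (Real.exp (-6 * x) - 1) := by
  have h1 : 4 * y ^ 2 < 4 * x ^ 2 := by nlinarith
  have h2 : Real.exp (-6 * y) - 1 < Real.exp (-6 * x) - 1 := by
    have := Real.exp_lt_exp.mpr (show -6 * y < -6 * x by linarith)
    linarith
  have h3 : (0:ℝ) < Real.exp (-6 * y) - 1 := by
    have h : Real.exp 0 < Real.exp (-6 * y) :=
      Real.exp_lt_exp.mpr (by linarith)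
    rw [Real.exp_zero] at h
    linarith
  have h4 : (0:ℝ) < 4 * y ^ 2 := by nlinarith
  nlinarith

theorem stmt_9 (L a₁ a₂ : ℝ) (hL : 0 < L) (h1 : a₁ < 0) (h2 : a₂ < 0)
    (e1 : L ^ 2 = 4 * a₁ ^ 2 * (Real.exp (-6 * a₁) - 1))
    (e2 : L ^ 2 = 4 * a₂ ^ 2 * (Real.exp (-6 * a₂) - 1)) :
    a₁ = a₂ := by
  rcases lt_trichotomy a₁ a₂ with h | h | h
  · have := aux_mono a₁ a₂ h1 h2 h; linarith
  · exact h
  · have := aux_mono a₂ a₁ h2 h1 h; linarith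
end

section
/- Suppose a < 0, b > 0, c ≤ 2a, d² ≤ (4/5)² b², and (a²+b²) = e^{2(c-a)}(c²+d²). Then b² ≤ (100/9) e^{-2}. -/
theorem stmt_10 (a b c d : ℝ) (ha : a < 0) (hb : 0 < b) (hc : c ≤ 2 * a)
    (hd : d ^ 2 ≤ (4/5) ^ 2 * b ^ 2)
    (h : a ^ 2 + b ^ 2 = Real.exp (2 * (c - a)) * (c ^ 2 + d ^ 2)) :
    b ^ 2 ≤ (100/9) * Real.exp (-2) := by
  have hcneg : c < 0 := lt_of_le_of_lt hc (by linarith)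
  have hEpos : 0 < Real.exp (2 * (c - a)) := Real.exp_pos _
  have hE1 : Real.exp (2 * (c - a)) ≤ Real.exp c := Real.exp_le_exp.mpr (by linarith)
  have hEc1 : Real.exp c ≤ 1 := Real.exp_le_one_iff.mpr hcneg.le
  -- b² ≤ (25/9) * exp(2(c-a)) * c²
  have key : b ^ 2 ≤ (25/9) * Real.exp (2 * (c - a)) * c ^ 2 := by
    nlinarith [sq_nonneg a, sq_nonneg b, sq_nonneg c, sq_nonneg d,
      mul_le_mul_of_nonneg_left hd hEpos.le,
      mul_le_mul_of_nonneg_right (hE1.trans hEc1) (sq_nonneg b)]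
  -- c² * exp c ≤ 4 * exp (-2)
  have h2 : (-c) / 2 ≤ Real.exp ((-c) / 2 - 1) := by
    have := Real.add_one_le_exp ((-c) / 2 - 1); linarith
  have hmul : Real.exp ((-c) / 2 - 1) * Real.exp ((-c) / 2 - 1) = Real.exp (-c - 2) := by
    rw [← Real.exp_add]; ring_nf
  have h3 : c ^ 2 ≤ 4 * Real.exp (-c - 2) := by
    nlinarith [h2, hmul, Real.exp_pos ((-c) / 2 - 1)]
  have h4 : Real.exp (-c - 2) * Real.exp c = Real.exp (-2) := by
    rw [← Real.exp_add]; ring_nf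
  have h5 : c ^ 2 * Real.exp c ≤ 4 * Real.exp (-2) := by
    nlinarith [mul_le_mul_of_nonneg_right h3 (Real.exp_pos c).le, h4]
  nlinarith [key, mul_le_mul_of_nonneg_right hE1 (sq_nonneg c), h5]
end

section
/- Let L > 0, z ∈ ℂ, and φ ∈ C³([0,L]) be a nonzero complex-valued function such that φ''' + φ' + izφ = 0 on [0,L] and φ(0) = φ(L) = φ'(L) = 0. Then Im(z) ≥ 0. -/
open Set intervalIntegral Complex

theorem stmt_17 (L : ℝ) (hL : 0 < L) (z : ℂ) (φ φ' φ'' φ''' : ℝ → ℂ)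
    (hd1 : ∀ x ∈ Set.Icc (0 : ℝ) L, HasDerivWithinAt φ (φ' x) (Set.Icc (0 : ℝ) L) x)
    (hd2 : ∀ x ∈ Set.Icc (0 : ℝ) L, HasDerivWithinAt φ' (φ'' x) (Set.Icc (0 : ℝ) L) x)
    (hd3 : ∀ x ∈ Set.Icc (0 : ℝ) L, HasDerivWithinAt φ'' (φ''' x) (Set.Icc (0 : ℝ) L) x)
    (hcont : ContinuousOn φ''' (Set.Icc (0 : ℝ) L))
    (hODE : ∀ x ∈ Set.Icc (0 : ℝ) L, φ''' x + φ' x + Complex.I * z * φ x = 0)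
    (h0 : φ 0 = 0) (hLval : φ L = 0) (hLder : φ' L = 0)
    (hne : ∃ x ∈ Set.Icc (0 : ℝ) L, φ x ≠ 0) :
    0 ≤ z.im := by
  have hcφ : ContinuousOn φ (Set.Icc 0 L) := fun x hx => (hd1 x hx).continuousWithinAt
  have hcφ' : ContinuousOn φ' (Set.Icc 0 L) := fun x hx => (hd2 x hx).continuousWithinAt
  have hcφ'' : ContinuousOn φ'' (Set.Icc 0 L) := fun x hx => (hd3 x hx).continuousWithinAt
  set E : ℝ → ℂ := fun x => φ'' x * star (φ x) - (1/2) * (φ' x * star (φ' x))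
    + (1/2) * (φ x * star (φ x)) with hE
  set H : ℝ → ℝ := fun x => (E x).re with hH
  -- derivative of H at interior points
  have key : ∀ x ∈ Set.Ioo (0:ℝ) L, HasDerivAt H (z.im * Complex.normSq (φ x)) x := by
    intro x hx
    have hx' : x ∈ Set.Icc (0:ℝ) L := Set.Ioo_subset_Icc_self hx
    have hnb : Set.Icc (0:ℝ) L ∈ nhds x := Icc_mem_nhds hx.1 hx.2
    have h1 : HasDerivAt φ (φ' x) x := (hd1 x hx').hasDerivAt hnb
    have h2 : HasDerivAt φ' (φ'' x) x := (hd2 x hx').hasDerivAt hnb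
    have h3 : HasDerivAt φ'' (φ''' x) x := (hd3 x hx').hasDerivAt hnb
    have hEd : HasDerivAt E
        (φ''' x * star (φ x) + φ'' x * star (φ' x)
          - (1/2) * (φ'' x * star (φ' x) + φ' x * star (φ'' x))
          + (1/2) * (φ' x * star (φ x) + φ x * star (φ' x))) x := by
      exact (((h3.mul h1.star).sub ((h2.mul h2.star).const_mul (1/2))).add
        ((h1.mul h1.star).const_mul (1/2)))
    have hHd : HasDerivAt H
        (φ''' x * star (φ x) + φ'' x * star (φ' x)
          - (1/2) * (φ'' x * star (φ' x) + φ' x * star (φ'' x))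
          + (1/2) * (φ' x * star (φ x) + φ x * star (φ' x))).re x :=
      (Complex.reCLM.hasFDerivAt.comp_hasDerivAt x hEd)
    have hode : φ''' x = -φ' x - Complex.I * z * φ x := by
      have := hODE x hx'; linear_combination this
    convert hHd using 1
    simp only [hode, Complex.normSq_apply]
    simp [Complex.add_re, Complex.sub_re, Complex.mul_re, Complex.mul_im,
      Complex.I_re, Complex.I_im, Complex.neg_re, Complex.neg_im,
      Complex.conj_re, Complex.conj_im, Complex.star_def]
    ring
  -- continuity of H and integrability
  have hcE : ContinuousOn E (Set.Icc 0 L) :=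
    ((hcφ''.mul hcφ.star).sub ((hcφ'.mul hcφ'.star).const_smul ((1:ℂ)/2))).add
      ((hcφ.mul hcφ.star).const_smul ((1:ℂ)/2))
  have hcH : ContinuousOn H (Set.Icc 0 L) := Complex.continuous_re.comp_continuousOn hcE
  have hci : ContinuousOn (fun x => z.im * Complex.normSq (φ x)) (Set.Icc 0 L) :=
    (Complex.continuous_normSq.comp_continuousOn hcφ).const_smul z.im
  have hint : IntervalIntegrable (fun x => z.im * Complex.normSq (φ x))
      MeasureTheory.volume 0 L := by
    apply ContinuousOn.intervalIntegrable
    rwa [Set.uIcc_of_le hL.le]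
  have hFT : ∫ x in (0:ℝ)..L, z.im * Complex.normSq (φ x) = H L - H 0 :=
    intervalIntegral.integral_eq_sub_of_hasDerivAt_of_le hL.le hcH key hint
  have hHL : H L = 0 := by simp [hH, hE, hLval, hLder]
  have hH0 : H 0 = -(1/2) * Complex.normSq (φ' 0) := by
    simp [hH, hE, h0, Complex.normSq_apply, Complex.mul_re, Complex.conj_re, Complex.conj_im,
      Complex.star_def]
  have hpull : ∫ x in (0:ℝ)..L, z.im * Complex.normSq (φ x)
      = z.im * ∫ x in (0:ℝ)..L, Complex.normSq (φ x) :=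
    intervalIntegral.integral_const_mul _ _
  obtain ⟨x₀, hx₀, hx₀ne⟩ := hne
  have hIpos : 0 < ∫ x in (0:ℝ)..L, Complex.normSq (φ x) := by
    apply intervalIntegral.integral_pos hL (Complex.continuous_normSq.comp_continuousOn hcφ)
      (fun x _ => Complex.normSq_nonneg _)
    exact ⟨x₀, hx₀, by simpa [Complex.normSq_pos] using hx₀ne⟩
  have hmul : 0 ≤ z.im * ∫ x in (0:ℝ)..L, Complex.normSq (φ x) := by
    rw [← hpull, hFT, hHL, hH0]
    have := Complex.normSq_nonneg (φ' 0)
    linarith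
  nlinarith [hIpos, hmul]
end

section
/- Let a < 0 and b > 0 satisfy b cos b + a sin b = 0 and a cos b - b sin b > 0, with b ≥ π and b² = 4a²(e^{-6a} - 1/4). Then cos b < 0 and sin b < 0; consequently b ∈ (π + 2nπ, 3π/2 + 2nπ) for some n ∈ ℕ. -/
theorem stmt_19 (a b : ℝ) (ha : a < 0) (hb : 0 < b) (hbpi : Real.pi ≤ b)
    (h1 : b * Real.cos b + a * Real.sin b = 0)
    (h2 : 0 < a * Real.cos b - b * Real.sin b)
    (h3 : b ^ 2 = 4 * a ^ 2 * (Real.exp (-6 * a) - 1/4)) :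
    Real.cos b < 0 ∧ Real.sin b < 0 ∧
    ∃ n : ℕ, Real.pi + 2 * n * Real.pi < b ∧ b < 3 * Real.pi / 2 + 2 * n * Real.pi := by
  have hpyth := Real.sin_sq_add_cos_sq b
  have hcos : Real.cos b < 0 := by
    rcases lt_trichotomy (Real.cos b) 0 with h | h | h
    · exact h
    · -- cos b = 0 → a * sin b = 0 → sin b = 0 → contradiction
      exfalso
      have hs : Real.sin b = 0 := by
        have : a * Real.sin b = 0 := by rw [h] at h1; linarith
        rcases mul_eq_zero.1 this with h' | h'
        · linarith
        · exact h'
      rw [h, hs] at hpyth; norm_num at hpyth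
    · exfalso
      have hsin : 0 < Real.sin b := by nlinarith
      nlinarith
  have hsin : Real.sin b < 0 := by nlinarith
  refine ⟨hcos, hsin, ?_⟩
  have hpi := Real.pi_pos
  set k : ℤ := ⌊b / (2 * Real.pi)⌋ with hk
  have hk0 : 0 ≤ k := Int.floor_nonneg.2 (by positivity)
  have hkle : (k : ℝ) ≤ b / (2 * Real.pi) := Int.floor_le _
  have hklt : b / (2 * Real.pi) < k + 1 := Int.lt_floor_add_one _
  have hx1 : (k : ℝ) * (2 * Real.pi) ≤ b := by
    rw [le_div_iff₀ (by positivity)] at hkle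
    linarith
  have hx2 : b < ((k : ℝ) + 1) * (2 * Real.pi) := by
    rw [div_lt_iff₀ (by positivity)] at hklt
    nlinarith
  set x : ℝ := b - k * (2 * Real.pi) with hxdef
  have hsx : Real.sin x = Real.sin b := Real.sin_sub_int_mul_two_pi b k
  have hcx : Real.cos x = Real.cos b := Real.cos_sub_int_mul_two_pi b k
  have hx0 : 0 ≤ x := by simp [hxdef]; linarith
  have hxlt : x < 2 * Real.pi := by simp [hxdef]; nlinarith
  -- sin x < 0 ⇒ x > π
  have hxgt : Real.pi < x := by
    by_contra hle
    push_neg at hle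
    have := Real.sin_nonneg_of_nonneg_of_le_pi hx0 hle
    rw [hsx] at this; linarith
  -- cos x < 0 ⇒ x < 3π/2
  have hxlt2 : x < 3 * Real.pi / 2 := by
    by_contra hge
    push_neg at hge
    have h2x : 2 * Real.pi - x ∈ Set.Icc (-(Real.pi/2)) (Real.pi/2) := by
      constructor <;> [linarith; linarith]
    have := Real.cos_nonneg_of_mem_Icc h2x
    rw [Real.cos_sub, Real.cos_two_pi, Real.sin_two_pi] at this
    simp at this
    rw [hcx] at this; linarith
  have hcast : ((k.toNat : ℕ) : ℝ) = (k : ℝ) := by exact_mod_cast Int.toNat_of_nonneg hk0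
  refine ⟨k.toNat, ?_, ?_⟩ <;> rw [hcast] <;> nlinarith
end
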